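/- arXiv:2305.15738 — 2 statements merged into one kernel-verified Lean document; each statement's English description precedes it below -/
import Mathlib

section
/- Let G be an n-vertex graph and F a finite multiset of subsets of V(G) such that for every S in F, no connected component of G - S has more than n/2 vertices. Suppose no vertex of G belongs to more than c sets of F (counted with multiplicity), and |F| ≥ 3ck. If G contains a connected component with more than 3n/4 vertices, then G contains an induced path on at least k vertices. -/
open scoped Classical

/-- The graph obtained from `G` by deleting the vertices of `S`
(deleted vertices become isolated). -/
def removeVerts {V : Type*} (G : SimpleGraph V) (S : Set V) : SimpleGraph V where
  Adj u w := G.Adj u w ∧ u ∉ S ∧ w ∉ S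
  symm := ⟨fun u w h => ⟨h.1.symm, h.2.2, h.2.1⟩⟩
  loopless := ⟨fun u h => G.irrefl h.1⟩

/-!
Let `C` be the component with more than `3n/4` vertices. If no two vertices of `C` are at distance
`≥ k - 1`, then for `x, y ∈ C` a shortest walk has at most `k - 1` vertices, and any `S` that
contains `x` or separates `x` from `y` meets it; so at most `c (k - 1)` members of `F` do this to
the ordered pair `(x, y)`. Conversely each `S ∈ F` leaves every vertex outside `S` in a component of
size `≤ n/2`, so it does this to at least `|C| (2|C| - n) / 2 > |C|² / 3` ordered pairs. Double
counting gives `|F| < 3ck`. Otherwise a shortest walk between two far-apart vertices of `C` is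
an induced path on at least `k` vertices.
-/

open Finset

namespace Multiset

variable {α β : Type*}

lemma sum_map_card_filter_eq_sum_countP (F : Multiset α) (s : Finset β) (R : α → β → Prop)
    [∀ a, DecidablePred (R a)] [∀ b, DecidablePred (R · b)] :
    (F.map fun a => #{b ∈ s | R a b}).sum = ∑ b ∈ s, F.countP (R · b) := by
  induction F using Multiset.induction_on with
  | empty => simp
  | cons a F ih =>
    rw [map_cons, sum_cons, ih, card_filter, ← Finset.sum_add_distrib]
    simp only [countP_cons, add_comm]

lemma countP_le_sum_countP_of_forall_exists (F : Multiset α) (l : List β) {P : α → Prop}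
    (R : β → α → Prop) [DecidablePred P] [∀ b, DecidablePred (R b)]
    (h : ∀ a, P a → ∃ b ∈ l, R b a) :
    F.countP P ≤ (l.map fun b => F.countP (R b)).sum := by
  induction F using Multiset.induction_on with
  | empty => simp
  | cons a F ih =>
    simp only [countP_cons, List.sum_map_add]
    refine Nat.add_le_add ih ?_
    split_ifs with hP
    · obtain ⟨b, hb, hR⟩ := h a hP
      simpa [hR] using
        List.le_sum_of_mem (List.mem_map_of_mem (f := fun b => if R b a then 1 else 0) hb)
    · exact Nat.zero_le _

lemma card_mul_le_of_double_count (F : Multiset α) (s : Finset β) (R : α → β → Prop)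
    [∀ a, DecidablePred (R a)] [∀ b, DecidablePred (R · b)] {a b d : ℕ}
    (hlow : ∀ x ∈ F, a ≤ d * #{y ∈ s | R x y}) (hup : ∀ y ∈ s, F.countP (R · y) ≤ b) :
    card F * a ≤ d * (#s * b) := by
  calc card F * a = card (F.map fun x => d * #{y ∈ s | R x y}) • a := by simp
    _ ≤ (F.map fun x => d * #{y ∈ s | R x y}).sum :=
        card_nsmul_le_sum (by simpa using hlow)
    _ = d * ∑ y ∈ s, F.countP (R · y) := by
        rw [sum_map_mul_left, sum_map_card_filter_eq_sum_countP]
    _ ≤ d * (#s * b) :=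
        Nat.mul_le_mul_left _ (by simpa using Finset.sum_le_card_nsmul _ _ _ hup)

end Multiset

namespace SimpleGraph

variable {V : Type*} {G : SimpleGraph V} {u v : V}

def IsInducedPath {m : ℕ} (G : SimpleGraph V) (f : Fin m → V) : Prop :=
  Function.Injective f ∧
    ∀ i j : Fin m, i ≠ j → (G.Adj (f i) (f j) ↔ ((i : ℕ) + 1 = (j : ℕ) ∨ (j : ℕ) + 1 = (i : ℕ)))

lemma Walk.dist_getVert_getVert_of_le {p : G.Walk u v} (hp : p.length = G.dist u v) {i j : ℕ}
    (hij : i ≤ j) (hj : j ≤ p.length) : G.dist (p.getVert i) (p.getVert j) = j - i := by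
  have hq : ((p.drop i).take (j - i)).length = j - i := by
    simp only [take_length, drop_length]; omega
  have hend : (p.drop i).getVert (j - i) = p.getVert j := by
    rw [drop_getVert, Nat.add_sub_cancel' hij]
  have hle := dist_le ((p.drop i).take (j - i))
  rw [hq, hend] at hle
  -- splicing a shortest walk from `p.getVert i` to `p.getVert j` into `p` cannot beat `p`
  obtain ⟨r, hr⟩ :=
    Reachable.exists_walk_length_eq_dist ⟨hend ▸ (p.drop i).take (j - i)⟩
  have := dist_le (((p.take i).append r).append (p.drop j))
  simp only [length_append, take_length, drop_length] at this
  omega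

lemma Walk.isInducedPath_getVert {p : G.Walk u v} (hp : p.length = G.dist u v) :
    G.IsInducedPath fun i : Fin (p.length + 1) => p.getVert i := by
  have hdist : ∀ i j : Fin (p.length + 1),
      G.dist (p.getVert i) (p.getVert j) = Nat.dist i j := by
    intro i j
    rcases le_total (i : ℕ) j with hij | hji
    · rw [p.dist_getVert_getVert_of_le hp hij (by omega), Nat.dist]; omega
    · rw [dist_comm, p.dist_getVert_getVert_of_le hp hji (by omega), Nat.dist]; omega
  refine ⟨fun i j hij => Fin.ext ?_, fun i j hij => ?_⟩
  · have := hdist i j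
    rw [show p.getVert i = p.getVert j from hij, dist_self, Nat.dist] at this
    omega
  · rw [← dist_eq_one_iff_adj, hdist, Nat.dist, Ne, Fin.ext_iff] at *
    omega

lemma Reachable.exists_isInducedPath (h : G.Reachable u v) :
    ∃ f : Fin (G.dist u v + 1) → V, G.IsInducedPath f := by
  obtain ⟨p, hp⟩ := h.exists_walk_length_eq_dist
  exact hp ▸ ⟨_, p.isInducedPath_getVert hp⟩

lemma Walk.reachable_removeVerts {S : Set V} (p : G.Walk u v) (hp : ∀ w ∈ p.support, w ∉ S) :
    (removeVerts G S).Reachable u v := by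
  induction p with
  | nil => rfl
  | cons hadj p ih =>
    simp only [support_cons, List.mem_cons, forall_eq_or_imp] at hp
    have hadj' : (removeVerts G S).Adj _ _ := ⟨hadj, hp.1, hp.2 _ p.start_mem_support⟩
    exact hadj'.reachable.trans (ih hp.2)

lemma card_mul_two_mul_sub_le_two_mul_card_filter_not_reachable [Fintype V] (S : Set V)
    {n : ℕ} (hS : ∀ v ∉ S, 2 * {u | G.Reachable u v}.ncard ≤ n) (s : Finset V) :
    #s * (2 * #s - n) ≤ 2 * #{p ∈ s ×ˢ s | ¬ (p.1 ∉ S ∧ G.Reachable p.1 p.2)} := by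
  have hgood : 2 * #{p ∈ s ×ˢ s | p.1 ∉ S ∧ G.Reachable p.1 p.2} ≤ #s * n := by
    rw [card_filter, sum_product, mul_sum]
    simp_rw [← card_filter]
    refine sum_le_card_nsmul _ _ _ fun x _ => ?_
    by_cases hx : x ∈ S
    · simp [hx]
    refine le_trans ?_ (hS x hx)
    rw [← Set.ncard_coe_finset]
    gcongr
    · exact Set.toFinite _
    · exact fun y hy => (mem_filter.mp hy).2.2.symm
  have hsplit := card_filter_add_card_filter_not (s := s ×ˢ s)
    fun p => p.1 ∉ S ∧ G.Reachable p.1 p.2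
  rw [card_product] at hsplit
  rw [Nat.mul_sub, mul_left_comm]
  omega

lemma countP_not_reachable_removeVerts_le {F : Multiset (Set V)} {c : ℕ}
    (hmult : ∀ v : V, (F.filter fun S => v ∈ S).card ≤ c) (p : G.Walk u v) :
    F.countP (fun S => ¬ (u ∉ S ∧ (removeVerts G S).Reachable u v)) ≤ c * (p.length + 1) := by
  have hcover : ∀ S, ¬ (u ∉ S ∧ (removeVerts G S).Reachable u v) → ∃ w ∈ p.support, w ∈ S := by
    intro S hS
    by_contra! hout
    exact hS ⟨hout u p.start_mem_support, p.reachable_removeVerts hout⟩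
  calc _ ≤ (p.support.map fun w => F.countP (w ∈ ·)).sum :=
        F.countP_le_sum_countP_of_forall_exists _ _ hcover
    _ ≤ (p.support.map fun w => F.countP (w ∈ ·)).length • c := by
        refine List.sum_le_card_nsmul _ c fun _ hw => ?_
        obtain ⟨w, -, rfl⟩ := List.mem_map.mp hw
        exact (Multiset.countP_eq_card_filter _ _).trans_le (hmult w)
    _ = c * (p.length + 1) := by
        rw [List.length_map, Walk.length_support, smul_eq_mul, mul_comm]

end SimpleGraph

open SimpleGraph

lemma lt_three_mul_of_double_count {f m n c k : ℕ} (hc : 0 < c) (hk : 0 < k)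
    (hmn : 3 * n < 4 * m) (h : f * (m * (2 * m - n)) ≤ 2 * (m * m * (c * (k - 1)))) :
    f < 3 * c * k := by
  obtain ⟨K, rfl⟩ : ∃ K, k = K + 1 := ⟨k - 1, by omega⟩
  rw [Nat.add_sub_cancel] at h
  by_contra! hf
  have h1 : f * m * (2 * m + 1) ≤ f * m * (3 * (2 * m - n)) := Nat.mul_le_mul_left _ (by omega)
  have h2 : 3 * c * (K + 1) * (m * (2 * m + 1)) ≤ f * (m * (2 * m + 1)) :=
    Nat.mul_le_mul_right _ hf
  nlinarith [Nat.mul_pos hc (Nat.mul_pos (show 0 < m by omega) (show 0 < m by omega))]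

theorem cant_pack_balanced_separators_general {V : Type*} [Fintype V]
    (G : SimpleGraph V) (F : Multiset (Set V)) (c k : ℕ) (hc : 0 < c)
    (hbal : ∀ S ∈ F, ∀ v : V, v ∉ S →
      2 * {u : V | (removeVerts G S).Reachable u v}.ncard ≤ Fintype.card V)
    (hmult : ∀ v : V, (F.filter fun S => v ∈ S).card ≤ c)
    (hF : 3 * c * k ≤ Multiset.card F)
    (hbig : ∃ v : V, 3 * Fintype.card V < 4 * {u : V | G.Reachable u v}.ncard) :
    ∃ (m : ℕ) (f : Fin m → V), k ≤ m ∧ Function.Injective f ∧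
      ∀ i j : Fin m, i ≠ j →
        (G.Adj (f i) (f j) ↔ ((i : ℕ) + 1 = (j : ℕ) ∨ (j : ℕ) + 1 = (i : ℕ))) := by
  obtain ⟨v, hv⟩ := hbig
  set C := {u | G.Reachable u v}.toFinset
  rw [Set.ncard_eq_toFinset_card'] at hv
  have hC : ∀ x ∈ C, ∀ y ∈ C, G.Reachable x y := by
    simp only [C, Set.mem_toFinset]
    exact fun x hx y hy => hx.trans hy.symm
  by_cases hlong : ∃ x ∈ C, ∃ y ∈ C, k ≤ G.dist x y + 1
  · obtain ⟨x, hx, y, hy, hk⟩ := hlong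
    obtain ⟨f, hf⟩ := (hC x hx y hy).exists_isInducedPath
    exact ⟨_, f, hk, hf⟩
  push Not at hlong
  have hvC : v ∈ C := by simp [C]
  have hk : 0 < k := (Nat.zero_le _).trans_lt (hlong v hvC v hvC)
  have hupper : ∀ p ∈ C ×ˢ C,
      F.countP (fun S => ¬ (p.1 ∉ S ∧ (removeVerts G S).Reachable p.1 p.2)) ≤ c * (k - 1) := by
    rintro ⟨x, y⟩ hxy
    rw [mem_product] at hxy
    obtain ⟨w, hw⟩ := (hC x hxy.1 y hxy.2).exists_walk_length_eq_dist
    have := hlong x hxy.1 y hxy.2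
    calc F.countP _ ≤ c * (w.length + 1) := by
          -- only the decidability instances differ
          convert countP_not_reachable_removeVerts_le hmult w
      _ ≤ c * (k - 1) := Nat.mul_le_mul_left _ (by omega)
  have hcount := F.card_mul_le_of_double_count (C ×ˢ C) _
    (fun S hS => card_mul_two_mul_sub_le_two_mul_card_filter_not_reachable S (hbal S hS) C) hupper
  rw [card_product] at hcount
  exact absurd hF (lt_three_mul_of_double_count hc hk hv hcount).not_ge

/-- If `F` is a multiset of `n/2`-balanced separators of an `n`-vertex graph `G`, no
vertex belongs to more than `c` sets of `F` (with multiplicity), `|F| ≥ 3ck`, and `G`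
has a connected component with more than `3n/4` vertices, then `G` contains an induced
path on at least `k` vertices. -/
theorem cant_pack_balanced_separators {V : Type*} [Fintype V]
    (G : SimpleGraph V) (F : Multiset (Set V)) (c k : ℕ) (hc : 0 < c) (hk : 0 < k)
    (hbal : ∀ S ∈ F, ∀ v : V, v ∉ S →
      2 * {u : V | (removeVerts G S).Reachable u v}.ncard ≤ Fintype.card V)
    (hmult : ∀ v : V, (F.filter fun S => v ∈ S).card ≤ c)
    (hF : 3 * c * k ≤ Multiset.card F)
    (hbig : ∃ v : V, 3 * Fintype.card V < 4 * {u : V | G.Reachable u v}.ncard) :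
    ∃ (m : ℕ) (f : Fin m → V), k ≤ m ∧ Function.Injective f ∧
      ∀ i j : Fin m, i ≠ j →
        (G.Adj (f i) (f j) ↔ ((i : ℕ) + 1 = (j : ℕ) ∨ (j : ℕ) + 1 = (i : ℕ))) :=
  cant_pack_balanced_separators_general G F c k hc hbal hmult hF hbig
end

section
/- Let G be a graph, F a multiset of vertex subsets of G, and suppose every vertex of G belongs to at most c sets of F (with multiplicity). If a, b are vertices such that for at least ck sets S in F (with multiplicity), a and b lie in different connected components of G - S or at least one of a, b lies in S, then every induced path in G from a to b has at least k vertices. -/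
/-!
Every set separating `a` from `b` contains a vertex of any `a`–`b` walk. A path has
`length + 1` vertices, each lying in at most `c` sets of `F`, so at most `c * (length + 1)`
sets of `F` meet it; hence `c * k ≤ c * (length + 1)`.
-/

open scoped Classical

theorem Multiset.card_filter_exists_mem_le {V : Type*} (F : Multiset (Set V)) (c : ℕ)
    (hmult : ∀ v : V, (F.filter fun S => v ∈ S).card ≤ c) (l : List V) :
    (F.filter fun S => ∃ v ∈ l, v ∈ S).card ≤ c * l.length := by
  induction l with
  | nil => simp
  | cons x l ih =>
    have hsplit : (F.filter fun S => ∃ v ∈ x :: l, v ∈ S) =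
        F.filter fun S => x ∈ S ∨ ∃ v ∈ l, v ∈ S :=
      Multiset.filter_congr fun S _ => by simp
    calc (F.filter fun S => ∃ v ∈ x :: l, v ∈ S).card
        ≤ (F.filter fun S => x ∈ S).card + (F.filter fun S => ∃ v ∈ l, v ∈ S).card := by
          rw [hsplit, ← Multiset.card_add, Multiset.filter_add_filter, Multiset.card_add]
          exact Nat.le_add_right _ _
      _ ≤ c + c * l.length := Nat.add_le_add (hmult x) ih
      _ = c * (x :: l).length := by rw [List.length_cons]; ring

namespace SimpleGraph.Walk

variable {V : Type*} {G : SimpleGraph V} {S : Set V}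

theorem reachable_removeVerts_s19 {u v : V} (p : G.Walk u v) (hp : ∀ x ∈ p.support, x ∉ S) :
    (removeVerts G S).Reachable u v := by
  induction p with
  | nil => rfl
  | cons hadj p ih =>
    simp only [support_cons, List.mem_cons, forall_eq_or_imp] at hp
    have hadj' : (removeVerts G S).Adj _ _ := ⟨hadj, hp.1, hp.2 _ p.start_mem_support⟩
    exact hadj'.reachable.trans (ih hp.2)

theorem exists_mem_support_of_separates {a b : V} (p : G.Walk a b)
    (hS : a ∈ S ∨ b ∈ S ∨ ¬ (removeVerts G S).Reachable a b) : ∃ x ∈ p.support, x ∈ S := by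
  by_contra! hp
  rcases hS with ha | hb | hunreach
  · exact hp a p.start_mem_support ha
  · exact hp b p.end_mem_support hb
  · exact hunreach (p.reachable_removeVerts_s19 hp)

end SimpleGraph.Walk

/-- If every vertex belongs to at most `c` sets of the multiset `F`, and at least `c·k`
sets `S` of `F` separate `a` from `b` (meaning `a ∈ S`, or `b ∈ S`, or `a` and `b` lie in
different components of `G - S`), then every induced path from `a` to `b` has at least
`k` vertices. -/
theorem separated_pair_long_induced_path {V : Type*} [Fintype V]
    (G : SimpleGraph V) (F : Multiset (Set V)) (c k : ℕ) (hc : 0 < c) (hk : 0 < k)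
    (a b : V)
    (hmult : ∀ v : V, (F.filter fun S => v ∈ S).card ≤ c)
    (hsep : c * k ≤ (F.filter fun S =>
      a ∈ S ∨ b ∈ S ∨ ¬ (removeVerts G S).Reachable a b).card) :
    ∀ p : G.Walk a b, p.IsPath →
      (∀ i j : ℕ, i + 1 < j → j ≤ p.length → ¬ G.Adj (p.getVert i) (p.getVert j)) →
      k ≤ p.length + 1 := by
  intro p _ _
  have hmeet : (F.filter fun S => a ∈ S ∨ b ∈ S ∨ ¬ (removeVerts G S).Reachable a b) ≤
      F.filter fun S => ∃ x ∈ p.support, x ∈ S :=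
    Multiset.monotone_filter_right F fun S hS => p.exists_mem_support_of_separates hS
  have hck : c * k ≤ c * (p.length + 1) :=
    calc c * k ≤ _ := hsep
      _ ≤ _ := Multiset.card_le_card hmeet
      _ ≤ c * p.support.length := F.card_filter_exists_mem_le c hmult p.support
      _ = c * (p.length + 1) := by rw [p.length_support]
  exact Nat.le_of_mul_le_mul_left hck hc
end
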